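/- arXiv:1305.6569 — 2 statements merged into one kernel-verified Lean document; each statement's English description precedes it below -/
import Mathlib

section
/- For positive real numbers a_1, ..., a_n, the sum over all permutations σ of {1,...,n} of the product over i = 1,...,n of (a_{σ(i)} + a_{σ(i+1)} + ... + a_{σ(n)})^{-1} equals the product of a_i^{-1} for i = 1,...,n. -/
open Finset

lemma Ici_succ_map {n : ℕ} (i : Fin n) :
    Ici i.succ = (Ici i).map ⟨Fin.succ, Fin.succ_injective n⟩ := by
  ext j
  simp only [mem_Ici, mem_map, Function.Embedding.coeFn_mk]
  constructor
  · intro hj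
    have h0 : j ≠ 0 := by
      intro h; rw [h] at hj; exact LT.lt.not_ge (Fin.succ_pos i) hj
    refine ⟨j.pred h0, ?_, Fin.succ_pred j h0⟩
    rwa [← Fin.succ_le_succ_iff, Fin.succ_pred]
  · rintro ⟨k, hk, rfl⟩
    exact Fin.succ_le_succ_iff.mpr hk

lemma sum_Ici_succ {n : ℕ} (i : Fin n) (f : Fin (n+1) → ℝ) :
    ∑ j ∈ Ici i.succ, f j = ∑ j ∈ Ici i, f j.succ := by
  rw [Ici_succ_map, Finset.sum_map]; rfl

lemma Ici_zero_eq_univ {n : ℕ} : Ici (0 : Fin (n+1)) = univ := by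
  ext j; simp [Fin.zero_le]

/-- For positive reals `a 1, ..., a n`, the sum over all permutations `σ` of the
product over `i` of the inverse tail sums `(∑_{j=i}^n a (σ j))⁻¹` equals `∏ i, (a i)⁻¹`. -/
theorem sum_perm_prod_inv_tail_sums (n : ℕ) (a : Fin n → ℝ) (ha : ∀ i, 0 < a i) :
    ∑ σ : Equiv.Perm (Fin n), ∏ i : Fin n, (∑ j ∈ Finset.Ici i, a (σ j))⁻¹
      = ∏ i : Fin n, (a i)⁻¹ := by
  induction n with
  | zero => simp
  | succ n ih =>
    have hS : (0:ℝ) < ∑ i, a i := Finset.sum_pos (fun i _ => ha i) univ_nonempty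
    rw [← Equiv.sum_comp Equiv.Perm.decomposeFin.symm
      (fun σ => ∏ i : Fin (n+1), (∑ j ∈ Finset.Ici i, a (σ j))⁻¹), Fintype.sum_prod_type]
    have key : ∀ p : Fin (n+1), ∑ e : Equiv.Perm (Fin n),
        ∏ i : Fin (n+1), (∑ j ∈ Ici i, a (Equiv.Perm.decomposeFin.symm (p, e) j))⁻¹
        = (∑ i, a i)⁻¹ * ((∏ i, (a i)⁻¹) * a p) := by
      intro p
      set b : Fin n → ℝ := fun k => a (Equiv.swap 0 p k.succ) with hb
      have hbpos : ∀ k, 0 < b k := fun k => ha _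
      have hsplit : ∀ e : Equiv.Perm (Fin n),
          ∏ i : Fin (n+1), (∑ j ∈ Ici i, a (Equiv.Perm.decomposeFin.symm (p, e) j))⁻¹
          = (∑ i, a i)⁻¹ * ∏ i : Fin n, (∑ j ∈ Ici i, b (e j))⁻¹ := by
        intro e
        rw [Fin.prod_univ_succ]
        congr 1
        · rw [Ici_zero_eq_univ,
            Equiv.sum_comp (Equiv.Perm.decomposeFin.symm (p, e)) a]
        · refine Finset.prod_congr rfl fun i _ => ?_
          rw [sum_Ici_succ]
          refine congrArg _ (Finset.sum_congr rfl fun j _ => ?_)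
          rw [Equiv.Perm.decomposeFin_symm_apply_succ]
      calc ∑ e : Equiv.Perm (Fin n),
            ∏ i : Fin (n+1), (∑ j ∈ Ici i, a (Equiv.Perm.decomposeFin.symm (p, e) j))⁻¹
          = ∑ e : Equiv.Perm (Fin n),
            (∑ i, a i)⁻¹ * ∏ i : Fin n, (∑ j ∈ Ici i, b (e j))⁻¹ := by
            exact Finset.sum_congr rfl fun e _ => hsplit e
        _ = (∑ i, a i)⁻¹ * ∑ e : Equiv.Perm (Fin n),
            ∏ i : Fin n, (∑ j ∈ Ici i, b (e j))⁻¹ := by rw [← Finset.mul_sum]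
        _ = (∑ i, a i)⁻¹ * ∏ k : Fin n, (b k)⁻¹ := by rw [ih b hbpos]
        _ = (∑ i, a i)⁻¹ * ((∏ i, (a i)⁻¹) * a p) := by
            congr 1
            have h1 : ∏ i : Fin (n+1), (a (Equiv.swap 0 p i))⁻¹ = ∏ i, (a i)⁻¹ :=
              Equiv.prod_comp (Equiv.swap 0 p) (fun i => (a i)⁻¹)
            rw [Fin.prod_univ_succ] at h1
            have hp0 : Equiv.swap (0 : Fin (n+1)) p 0 = p := Equiv.swap_apply_left 0 p
            rw [hp0] at h1
            have hap : a p ≠ 0 := (ha p).ne'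
            rw [← h1, mul_comm ((a p)⁻¹) _, mul_assoc, inv_mul_cancel₀ hap, mul_one]
    rw [Finset.sum_congr rfl fun p _ => key p, ← Finset.mul_sum, ← Finset.mul_sum,
      Finset.mul_sum]
    have : ∑ p : Fin (n+1), (∏ i, (a i)⁻¹) * a p = (∏ i, (a i)⁻¹) * ∑ p, a p := by
      rw [Finset.mul_sum]
    rw [this]
    rw [mul_comm (∏ i, (a i)⁻¹) (∑ p, a p), ← mul_assoc, inv_mul_cancel₀ hS.ne', one_mul]
end

section
/- Let V : [0,1] → ℝ be continuous with V(x) < V(0) = 0 for x ∈ (0,1], V twice differentiable at 0 with V'(0)=0 and V''(0) < 0. Then as β → ∞, ∫_0^1 e^{βV(t)} dt ~ (1/2)√(2π/(-V''(0) β)), i.e., the ratio tends to 1. -/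
open Real Filter MeasureTheory Set intervalIntegral

-- second order Taylor estimate
lemma taylor2 (V : ℝ → ℝ) (c : ℝ) (hV0 : V 0 = 0)
    (hd1 : HasDerivAt V 0 0) (hd2 : HasDerivAt (deriv V) c 0) (hc : c ≠ 0) :
    ∀ ε > (0:ℝ), ∃ δ > (0:ℝ), ∀ t, 0 ≤ t → t ≤ δ → |V t - c / 2 * t ^ 2| ≤ ε * t ^ 2 := by
  intro ε hε
  have hd0 : deriv V 0 = 0 := hd1.deriv
  set ε' : ℝ := min ε (|c| / 2) with hε'def
  have hε' : 0 < ε' := lt_min hε (by positivity)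
  have hslope : Tendsto (slope (deriv V) 0) (nhdsWithin 0 {(0:ℝ)}ᶜ) (nhds c) :=
    hasDerivAt_iff_tendsto_slope.mp hd2
  rw [Metric.tendsto_nhdsWithin_nhds] at hslope
  obtain ⟨δ₁, hδ₁, hball⟩ := hslope ε' hε'
  have key : ∀ x : ℝ, 0 < x → x < δ₁ → |deriv V x - c * x| ≤ ε' * x ∧ DifferentiableAt ℝ V x := by
    intro x hx hxδ
    have hmem : x ∈ ({(0:ℝ)}ᶜ : Set ℝ) := by simp [ne_of_gt hx]
    have hd : dist x 0 < δ₁ := by simpa [abs_of_pos hx] using hxδ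
    have hsl : slope (deriv V) 0 x = deriv V x / x := by simp [slope_def_field, hd0]
    have h1 : |deriv V x / x - c| < ε' := by
      have := hball hmem hd
      rwa [Real.dist_eq, hsl] at this
    have h2 : |deriv V x - c * x| ≤ ε' * x := by
      have : deriv V x - c * x = (deriv V x / x - c) * x := by field_simp
      rw [this, abs_mul, abs_of_pos hx]
      exact mul_le_mul_of_nonneg_right h1.le hx.le
    refine ⟨h2, ?_⟩
    by_contra hnd
    rw [deriv_zero_of_not_differentiableAt hnd] at h1
    have : |c| < ε' := by simpa [abs_sub_comm] using h1
    have : |c| < |c| / 2 := lt_of_lt_of_le this (min_le_right _ _)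
    linarith [abs_nonneg c]
  refine ⟨δ₁ / 2, by linarith, fun t ht htδ => ?_⟩
  rcases eq_or_lt_of_le ht with h0 | h0
  · simp [← h0, hV0]
  set g : ℝ → ℝ := fun x => V x - c / 2 * x ^ 2 with hg
  set g' : ℝ → ℝ := fun x => deriv V x - c * x with hg'
  have hderiv : ∀ x ∈ Icc (0:ℝ) t, HasDerivWithinAt g (g' x) (Icc 0 t) x := by
    intro x hx
    rcases eq_or_lt_of_le hx.1 with h | h
    · have : HasDerivAt g 0 0 := by
        refine (hd1.sub (((hasDerivAt_pow 2 (0:ℝ)).const_mul (c/2)))).congr_deriv ?_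
        simp
      subst h
      have hx0 : g' 0 = 0 := by simp [hg', hd0]
      rw [hx0]
      exact this.hasDerivWithinAt
    · have hlt : x < δ₁ := lt_of_le_of_lt hx.2 (by linarith)
      have := (key x h hlt).2
      have hV : HasDerivAt V (deriv V x) x := this.hasDerivAt
      have : HasDerivAt g (deriv V x - c / 2 * (2 * x ^ 1)) x :=
        hV.sub (((hasDerivAt_pow 2 x).const_mul (c/2)))
      have h2 : deriv V x - c / 2 * (2 * x ^ 1) = g' x := by ring
      rw [h2] at this
      exact this.hasDerivWithinAt
  have hbound : ∀ x ∈ Icc (0:ℝ) t, ‖g' x‖ ≤ ε' * t := by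
    intro x hx
    rcases eq_or_lt_of_le hx.1 with h | h
    · subst h
      simp only [hg', hd0, mul_zero, sub_zero, norm_zero]
      positivity
    · have hlt : x < δ₁ := lt_of_le_of_lt hx.2 (by linarith)
      have := (key x h hlt).1
      calc ‖g' x‖ ≤ ε' * x := this
        _ ≤ ε' * t := mul_le_mul_of_nonneg_left hx.2 hε'.le
  have := (convex_Icc (0:ℝ) t).norm_image_sub_le_of_norm_hasDerivWithin_le hderiv hbound
    (left_mem_Icc.mpr ht) (right_mem_Icc.mpr ht)
  have h0' : g 0 = 0 := by simp [hg, hV0]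
  have : |g t| ≤ ε' * t * t := by
    simpa [h0', abs_of_pos h0] using this
  calc |V t - c / 2 * t ^ 2| = |g t| := rfl
    _ ≤ ε' * t * t := this
    _ ≤ ε * t ^ 2 := by
        have : ε' ≤ ε := min_le_left _ _
        nlinarith


lemma sqrt_tendsto_atTop : Tendsto Real.sqrt atTop atTop := by
  refine (tendsto_rpow_atTop (by norm_num : (0:ℝ) < 1/2)).congr' ?_
  filter_upwards [eventually_ge_atTop (0:ℝ)] with x hx
  rw [Real.sqrt_eq_rpow]

lemma gauss_lim {a δ : ℝ} (ha : 0 < a) (hδ : 0 < δ) :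
    Tendsto (fun β : ℝ => (∫ t in (0:ℝ)..δ, Real.exp (-(a * β) * t ^ 2)) * Real.sqrt β)
      atTop (nhds (Real.sqrt (π / a) / 2)) := by
  have hint : IntegrableOn (fun u : ℝ => Real.exp (-a * u ^ 2)) (Ioi 0) :=
    (integrable_exp_neg_mul_sq ha).integrableOn
  have htend : Tendsto (fun β : ℝ => Real.sqrt β * δ) atTop atTop :=
    sqrt_tendsto_atTop.atTop_mul_const hδ
  have key := intervalIntegral_tendsto_integral_Ioi 0 hint htend
  rw [integral_gaussian_Ioi] at key
  refine key.congr' ?_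
  filter_upwards [eventually_gt_atTop (0:ℝ)] with β hβ
  have hsq : Real.sqrt β ≠ 0 := by positivity
  have h1 : ∀ t : ℝ, Real.exp (-(a * β) * t ^ 2)
      = Real.exp (-a * (Real.sqrt β * t) ^ 2) := by
    intro t
    rw [mul_pow, Real.sq_sqrt hβ.le]
    ring_nf
  calc (∫ u in (0:ℝ)..(Real.sqrt β * δ), Real.exp (-a * u ^ 2))
      = Real.sqrt β • ∫ t in (0:ℝ)..δ, Real.exp (-a * (Real.sqrt β * t) ^ 2) := by
        rw [intervalIntegral.smul_integral_comp_mul_left (fun u => Real.exp (-a * u ^ 2))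
          (Real.sqrt β)]
        norm_num
    _ = (∫ t in (0:ℝ)..δ, Real.exp (-(a * β) * t ^ 2)) * Real.sqrt β := by
        rw [smul_eq_mul, mul_comm]
        congr 1
        exact intervalIntegral.integral_congr (fun t _ => (h1 t).symm)


lemma exp_mul_sqrt_tendsto_zero {M : ℝ} (hM : M < 0) :
    Tendsto (fun β : ℝ => Real.exp (β * M) * Real.sqrt β) atTop (nhds 0) := by
  have hM' : 0 < -M := by linarith
  have h1 : Tendsto (fun β : ℝ => (-M) * β) atTop atTop :=
    tendsto_atTop_atTop_of_monotone (fun x y hxy => by nlinarith)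
      (fun B => ⟨(B + 1) / (-M) + 1, by
        have := hM'
        rw [mul_add, mul_div_cancel₀ _ hM'.ne']
        nlinarith⟩)
  have h2 : Tendsto (fun β : ℝ => ((-M) * β) ^ 1 * Real.exp (-((-M) * β)))
      atTop (nhds 0) := (tendsto_pow_mul_exp_neg_atTop_nhds_zero 1).comp h1
  have h3 : Tendsto (fun β : ℝ => β * Real.exp (β * M)) atTop (nhds 0) := by
    have := h2.const_mul ((-M)⁻¹)
    rw [mul_zero] at this
    refine this.congr (fun β => ?_)
    rw [pow_one]
    have : -(-M * β) = β * M := by ring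
    rw [this]
    rw [show (-M)⁻¹ * (-M * β * Real.exp (β * M)) = (-M) * (-M)⁻¹ * (β * Real.exp (β * M)) by ring,
      mul_inv_cancel₀ hM'.ne', one_mul]
  refine tendsto_of_tendsto_of_tendsto_of_le_of_le' tendsto_const_nhds h3 ?_ ?_
  · filter_upwards [eventually_ge_atTop (0:ℝ)] with β hβ
    positivity
  · filter_upwards [eventually_ge_atTop (1:ℝ)] with β hβ
    have hs : Real.sqrt β ≤ β := by
      nth_rewrite 2 [← Real.sqrt_sq (by linarith : (0:ℝ) ≤ β)]
      apply Real.sqrt_le_sqrt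
      nlinarith
    calc Real.exp (β * M) * Real.sqrt β ≤ Real.exp (β * M) * β :=
          mul_le_mul_of_nonneg_left hs (Real.exp_nonneg _)
      _ = β * Real.exp (β * M) := by ring

lemma sqrt_pi_div_half (a : ℝ) (ha : 0 < a) :
    Real.sqrt (π / a) / 2 = Real.sqrt (π / (4 * a)) := by
  rw [show π / (4 * a) = (π / a) / 4 by ring, Real.sqrt_div (by positivity) 4,
    show (4:ℝ) = 2 ^ 2 by norm_num, Real.sqrt_sq (by norm_num : (0:ℝ) ≤ 2)]

/-- Laplace's method at a boundary maximum: if `V` is continuous on `[0,1]` with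
`V 0 = 0` its unique maximum (`V < 0` on `(0,1]`), `V' 0 = 0` and `V'' 0 = c < 0`,
then `∫₀¹ e^{β V} dt ~ √(π / (-2 c β))` as `β → ∞`. -/
theorem laplace_boundary_maximum (V : ℝ → ℝ) (c : ℝ)
    (hVcont : ContinuousOn V (Set.Icc 0 1))
    (hV0 : V 0 = 0) (hneg : ∀ x ∈ Set.Ioc (0 : ℝ) 1, V x < 0)
    (hd1 : HasDerivAt V 0 0) (hd2 : HasDerivAt (deriv V) c 0) (hc : c < 0) :
    Filter.Tendsto
      (fun β : ℝ => (∫ t in (0 : ℝ)..1, Real.exp (β * V t))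
        / Real.sqrt (Real.pi / (-2 * c * β)))
      Filter.atTop (nhds 1) := by
  set C : ℝ := -c with hCdef
  have hC : 0 < C := by rw [hCdef]; linarith
  set L : ℝ := Real.sqrt (π / (2 * C)) with hLdef
  have hLpos : 0 < L := Real.sqrt_pos.mpr (by positivity)
  have hcontExp : ∀ β : ℝ, ContinuousOn (fun t => Real.exp (β * V t)) (Icc 0 1) :=
    fun β => Real.continuous_exp.comp_continuousOn (continuousOn_const.mul hVcont)
  have hInt : ∀ β p q : ℝ, 0 ≤ p → p ≤ q → q ≤ 1 →
      IntervalIntegrable (fun t => Real.exp (β * V t)) volume p q := by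
    intro β p q hp hpq hq
    apply ((hcontExp β).mono ?_).intervalIntegrable
    rw [uIcc_of_le hpq]; exact Icc_subset_Icc hp hq
  -- the main asymptotic statement
  have main : Tendsto (fun β : ℝ => (∫ t in (0:ℝ)..1, Real.exp (β * V t)) * Real.sqrt β)
      atTop (nhds L) := by
    rw [tendsto_order]
    constructor
    · -- lower bound
      intro l hl
      -- choose ε
      obtain ⟨ε, hεl, hε⟩ : ∃ ε : ℝ, l < Real.sqrt (π / (2 * C * (1 + ε))) ∧ 0 < ε := by
        have hcont : ContinuousAt (fun ε : ℝ => Real.sqrt (π / (2 * C * (1 + ε)))) 0 := by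
          apply Real.continuous_sqrt.continuousAt.comp
          apply ContinuousAt.div continuousAt_const (by fun_prop)
          norm_num; positivity
        have hval : (fun ε : ℝ => Real.sqrt (π / (2 * C * (1 + ε)))) 0 = L := by norm_num [hLdef]
        have h1 : ∀ᶠ ε in nhds (0:ℝ), l < Real.sqrt (π / (2 * C * (1 + ε))) := by
          apply hcont.eventually (p := fun y => l < y)
          rw [hval]
          exact eventually_gt_nhds hl
        obtain ⟨ε, h1, h2⟩ := ((h1.filter_mono (nhdsWithin_le_nhds (s := Ioi (0:ℝ)))).and
          eventually_mem_nhdsWithin).exists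
        exact ⟨ε, h1, h2⟩
      obtain ⟨δ₀, hδ₀, hTay⟩ := taylor2 V c hV0 hd1 hd2 hc.ne (C * ε / 2) (by positivity)
      set δ := min δ₀ 1 with hδdef
      have hδpos : 0 < δ := lt_min hδ₀ one_pos
      have hδ1 : δ ≤ 1 := min_le_right _ _
      set a : ℝ := C * (1 + ε) / 2 with hadef
      have ha : 0 < a := by positivity
      have hVlow : ∀ t ∈ Icc (0:ℝ) δ, -a * t ^ 2 ≤ V t := by
        intro t ht
        have := hTay t ht.1 (le_trans ht.2 (min_le_left _ _))
        rw [abs_le] at this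
        have hcC : c = -C := by rw [hCdef]; ring
        nlinarith [this.1, this.2]
      have hglim := gauss_lim ha hδpos
      have hval : Real.sqrt (π / a) / 2 = Real.sqrt (π / (2 * C * (1 + ε))) := by
        rw [sqrt_pi_div_half a ha]
        congr 1
        rw [hadef]; ring_nf
      rw [hval] at hglim
      have hev := hglim.eventually (eventually_gt_nhds hεl)
      filter_upwards [hev, eventually_ge_atTop (0:ℝ)] with β hβ hβ0
      refine lt_of_lt_of_le hβ ?_
      apply mul_le_mul_of_nonneg_right ?_ (Real.sqrt_nonneg β)
      -- ∫₀^δ gaussian ≤ ∫₀^1 exp(βV)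
      have hIg : IntervalIntegrable (fun t => Real.exp (-(a * β) * t ^ 2)) volume 0 δ :=
        (Real.continuous_exp.comp (by fun_prop)).intervalIntegrable 0 δ
      have h1 : (∫ t in (0:ℝ)..δ, Real.exp (-(a * β) * t ^ 2))
          ≤ ∫ t in (0:ℝ)..δ, Real.exp (β * V t) := by
        apply intervalIntegral.integral_mono_on hδpos.le hIg (hInt β 0 δ le_rfl hδpos.le hδ1)
        intro t ht
        apply Real.exp_le_exp.2
        have := hVlow t ht
        nlinarith
      have h2 : (∫ t in (0:ℝ)..δ, Real.exp (β * V t)) ≤ ∫ t in (0:ℝ)..1, Real.exp (β * V t) := by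
        rw [← intervalIntegral.integral_add_adjacent_intervals
          (hInt β 0 δ le_rfl hδpos.le hδ1) (hInt β δ 1 hδpos.le hδ1 le_rfl)]
        have h3 : (0:ℝ) ≤ ∫ t in δ..1, Real.exp (β * V t) :=
          intervalIntegral.integral_nonneg hδ1 (fun t _ => (Real.exp_nonneg _))
        linarith
      linarith
    · -- upper bound
      intro u hu
      obtain ⟨ε, hεu, hε, hε1⟩ : ∃ ε : ℝ, Real.sqrt (π / (2 * C * (1 - ε))) < u ∧ 0 < ε ∧ ε < 1 := by
        have hcont : ContinuousAt (fun ε : ℝ => Real.sqrt (π / (2 * C * (1 - ε)))) 0 := by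
          apply Real.continuous_sqrt.continuousAt.comp
          apply ContinuousAt.div continuousAt_const (by fun_prop)
          norm_num; positivity
        have hval : (fun ε : ℝ => Real.sqrt (π / (2 * C * (1 - ε)))) 0 = L := by norm_num [hLdef]
        have h1 : ∀ᶠ ε in nhds (0:ℝ), Real.sqrt (π / (2 * C * (1 - ε))) < u := by
          apply hcont.eventually (p := fun y => y < u)
          rw [hval]
          exact eventually_lt_nhds hu
        have h2 : Ioo (0:ℝ) 1 ∈ nhdsWithin (0:ℝ) (Ioi 0) := Ioo_mem_nhdsGT_of_mem
          (by constructor <;> norm_num)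
        have h2' : ∀ᶠ ε in nhdsWithin (0:ℝ) (Ioi 0), ε ∈ Ioo (0:ℝ) 1 :=
          eventually_of_mem h2 (fun x hx => hx)
        obtain ⟨ε, h1, h2⟩ := ((h1.filter_mono (nhdsWithin_le_nhds (s := Ioi (0:ℝ)))).and h2').exists
        exact ⟨ε, h1, h2.1, h2.2⟩
      obtain ⟨δ₀, hδ₀, hTay⟩ := taylor2 V c hV0 hd1 hd2 hc.ne (C * ε / 2) (by positivity)
      set δ := min δ₀ 1 with hδdef
      have hδpos : 0 < δ := lt_min hδ₀ one_pos
      have hδ1 : δ ≤ 1 := min_le_right _ _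
      set a : ℝ := C * (1 - ε) / 2 with hadef
      have h1ε : 0 < 1 - ε := by linarith
      have ha : 0 < a := by positivity
      have hVup : ∀ t ∈ Icc (0:ℝ) δ, V t ≤ -a * t ^ 2 := by
        intro t ht
        have := hTay t ht.1 (le_trans ht.2 (min_le_left _ _))
        rw [abs_le] at this
        have hcC : c = -C := by rw [hCdef]; ring
        nlinarith [this.1, this.2]
      -- maximum on [δ, 1]
      obtain ⟨x₀, hx₀, hmax⟩ := isCompact_Icc.exists_isMaxOn (nonempty_Icc.mpr hδ1)
        (hVcont.mono (Icc_subset_Icc hδpos.le le_rfl))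
      set M : ℝ := V x₀ with hMdef
      have hM : M < 0 := hneg x₀ ⟨lt_of_lt_of_le hδpos hx₀.1, hx₀.2⟩
      have hglim := gauss_lim ha hδpos
      have hval : Real.sqrt (π / a) / 2 = Real.sqrt (π / (2 * C * (1 - ε))) := by
        rw [sqrt_pi_div_half a ha]
        congr 1
        rw [hadef]; ring_nf
      rw [hval] at hglim
      have htail := exp_mul_sqrt_tendsto_zero hM
      have hsum := hglim.add htail
      rw [add_zero] at hsum
      have hev := hsum.eventually (eventually_lt_nhds hεu)
      filter_upwards [hev, eventually_ge_atTop (0:ℝ)] with β hβ hβ0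
      refine lt_of_le_of_lt ?_ hβ
      rw [← add_mul]
      apply mul_le_mul_of_nonneg_right ?_ (Real.sqrt_nonneg β)
      have hIg : IntervalIntegrable (fun t => Real.exp (-(a * β) * t ^ 2)) volume 0 δ :=
        (Real.continuous_exp.comp (by fun_prop)).intervalIntegrable 0 δ
      have h1 : (∫ t in (0:ℝ)..δ, Real.exp (β * V t))
          ≤ ∫ t in (0:ℝ)..δ, Real.exp (-(a * β) * t ^ 2) := by
        apply intervalIntegral.integral_mono_on hδpos.le (hInt β 0 δ le_rfl hδpos.le hδ1) hIg
        intro t ht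
        apply Real.exp_le_exp.2
        have := hVup t ht
        nlinarith
      have h2 : (∫ t in δ..1, Real.exp (β * V t)) ≤ Real.exp (β * M) := by
        have hItail : IntervalIntegrable (fun _ : ℝ => Real.exp (β * M)) volume δ 1 :=
          intervalIntegrable_const
        have := intervalIntegral.integral_mono_on hδ1 (hInt β δ 1 hδpos.le hδ1 le_rfl) hItail
          (fun t ht => Real.exp_le_exp.2 (mul_le_mul_of_nonneg_left (hmax ht) hβ0))
        rw [intervalIntegral.integral_const, smul_eq_mul] at this
        refine le_trans this ?_
        nlinarith [Real.exp_nonneg (β * M)]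
      calc (∫ t in (0:ℝ)..1, Real.exp (β * V t))
          = (∫ t in (0:ℝ)..δ, Real.exp (β * V t)) + ∫ t in δ..1, Real.exp (β * V t) := by
            rw [intervalIntegral.integral_add_adjacent_intervals
              (hInt β 0 δ le_rfl hδpos.le hδ1) (hInt β δ 1 hδpos.le hδ1 le_rfl)]
        _ ≤ (∫ t in (0:ℝ)..δ, Real.exp (-(a * β) * t ^ 2)) + Real.exp (β * M) := by
            exact add_le_add h1 h2
  -- conclude
  have hfinal := main.div_const L
  rw [div_self hLpos.ne'] at hfinal
  refine hfinal.congr' ?_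
  filter_upwards [eventually_gt_atTop (0:ℝ)] with β hβ
  have hsβ : (0:ℝ) < Real.sqrt β := Real.sqrt_pos.mpr hβ
  have hden : Real.sqrt (π / (-2 * c * β)) = L / Real.sqrt β := by
    rw [hLdef, show π / (-2 * c * β) = (π / (2 * C)) / β by rw [hCdef]; field_simp,
      Real.sqrt_div (by positivity) β]
  rw [hden, div_div_eq_mul_div]
end
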